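/- arXiv:2312.04791 — 7 statements merged into one kernel-verified Lean document; each statement's English description precedes it below -/
import Mathlib

section
/- Let E be a real Banach space with a closed convex cone E⁺ such that E = E⁺ - E⁺ (E is positively generated). Then there exists α > 0 such that E is α-generated: every x ∈ E can be written x = y - z with y, z ∈ E⁺ and ‖y‖ + ‖z‖ ≤ α‖x‖. -/
/-!
Let `B` be the intersection of the cone with the closed unit ball. Since the cone is generating,
the multiples `n • (B - B)` cover the space, so by Baire's theorem `closure (B - B)` has an
interior point; as `B - B` is convex and symmetric, it is then a neighbourhood of `0`. Hence every
vector `v` is within `‖v‖ / 2` of some `y - z` with `y, z` in the cone and of norm `O(‖v‖)`.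
Iterating this approximation on the remainders gives two geometric series of cone elements;
their sums lie in the cone because it is closed, and decompose `x` exactly.
-/

open Set Filter Topology Metric Pointwise

section

variable {E : Type*} [AddCommGroup E] [Module ℝ E] [TopologicalSpace E] [IsTopologicalAddGroup E]
  [ContinuousSMul ℝ E] [BaireSpace E]

theorem Convex.closure_mem_nhds_zero_of_iUnion_smul_eq_univ {C : Set E} (hC : Convex ℝ C)
    (hneg : ∀ x ∈ C, -x ∈ C) (hunion : ⋃ n : ℕ, ((n : ℝ) + 1) • C = univ) :
    closure C ∈ 𝓝 0 := by
  have hcover : ⋃ n : ℕ, closure (((n : ℝ) + 1) • C) = univ :=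
    eq_univ_of_univ_subset (hunion ▸ iUnion_mono fun _ ↦ subset_closure)
  obtain ⟨n, hn⟩ := nonempty_interior_of_iUnion_of_closed (fun _ ↦ isClosed_closure) hcover
  have hn₀ : (n : ℝ) + 1 ≠ 0 := by positivity
  rw [closure_smul₀' hn₀, interior_smul₀ hn₀, Set.smul_set_nonempty] at hn
  obtain ⟨u, hu⟩ := hn
  have hnegu : -u ∈ closure C :=
    map_mem_closure continuous_neg (interior_subset hu) hneg
  have h₀ := hC.closure.combo_interior_self_mem_interior hu hnegu
    (by norm_num : (0 : ℝ) < 1 / 2) (by norm_num : (0 : ℝ) ≤ 1 / 2) (by norm_num)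
  rw [← smul_add, add_neg_cancel, smul_zero] at h₀
  exact mem_interior_iff_mem_nhds.1 h₀

end

section

variable {E : Type*} [NormedAddCommGroup E] [NormedSpace ℝ E]

theorem exists_properCone_coe_eq {P : Set E} (hclosed : IsClosed P) (hconv : Convex ℝ P)
    (hne : P.Nonempty) (hcone : ∀ t : ℝ, 0 ≤ t → ∀ x ∈ P, t • x ∈ P) :
    ∃ K : ProperCone ℝ E, (K : Set E) = P := by
  obtain ⟨p, hp⟩ := hne
  refine ⟨{ carrier := P
            zero_mem' := by simpa using hcone 0 le_rfl p hp
            add_mem' := fun {a b} ha hb ↦ ?_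
            smul_mem' := fun c x hx ↦ hcone c c.2 x hx
            isClosed' := hclosed }, rfl⟩
  convert hcone 2 zero_le_two _ (hconv ha hb (by norm_num : (0 : ℝ) ≤ 1 / 2)
    (by norm_num : (0 : ℝ) ≤ 1 / 2) (by norm_num)) using 1
  module

namespace ProperCone

variable (K : ProperCone ℝ E)

def unitBall : Set E := (K : Set E) ∩ closedBall 0 1

theorem convex_unitBall : Convex ℝ K.unitBall := K.convex.inter (convex_closedBall 0 1)

theorem closure_unitBall_sub_unitBall_mem_nhds [CompleteSpace E]
    (hgen : ∀ x : E, ∃ y ∈ K, ∃ z ∈ K, x = y - z) :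
    closure (K.unitBall - K.unitBall) ∈ 𝓝 0 := by
  refine K.convex_unitBall.sub K.convex_unitBall |>.closure_mem_nhds_zero_of_iUnion_smul_eq_univ
    ?_ (eq_univ_of_forall fun x ↦ ?_)
  · rintro _ ⟨a, ha, b, hb, rfl⟩
    exact ⟨b, hb, a, ha, (neg_sub a b).symm⟩
  · obtain ⟨y, hy, z, hz, rfl⟩ := hgen x
    obtain ⟨n, hn⟩ := exists_nat_ge (max ‖y‖ ‖z‖)
    have hn₀ : (0 : ℝ) < n + 1 := by positivity
    have hscale {w : E} (hw : w ∈ K) (hwn : ‖w‖ ≤ n) : ((n : ℝ) + 1)⁻¹ • w ∈ K.unitBall := by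
      refine ⟨K.smul_mem hw (by positivity), mem_closedBall_zero_iff.2 ?_⟩
      rw [norm_smul_of_nonneg (by positivity)]
      exact inv_mul_le_one_of_le₀ (by linarith) hn₀.le
    refine mem_iUnion.2 ⟨n, (mem_smul_set_iff_inv_smul_mem₀ hn₀.ne' _ _).2
      ⟨_, hscale hy (le_of_max_le_left hn), _, hscale hz (le_of_max_le_right hn), ?_⟩⟩
    rw [smul_sub]

theorem exists_approx_sub_of_ball_subset_closure {r : ℝ} (hr : 0 < r)
    (hball : ball 0 r ⊆ closure (K.unitBall - K.unitBall)) (v : E) :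
    ∃ y ∈ K, ∃ z ∈ K, ‖y‖ ≤ 2 / r * ‖v‖ ∧ ‖z‖ ≤ 2 / r * ‖v‖ ∧ ‖v - (y - z)‖ ≤ ‖v‖ / 2 := by
  rcases eq_or_ne v 0 with rfl | hv
  · exact ⟨0, K.zero_mem, 0, K.zero_mem, by simp⟩
  -- Approximate the rescaled vector `c⁻¹ • v` of norm `r / 2` to within `r / 4`.
  set c : ℝ := 2 / r * ‖v‖ with hc_def
  have hc : 0 < c := by positivity
  have hw : c⁻¹ • v ∈ ball (0 : E) r := by
    rw [mem_ball_zero_iff, norm_smul_of_nonneg (by positivity), hc_def]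
    field_simp
    linarith
  obtain ⟨_, ⟨a, ⟨haK, ha⟩, b, ⟨hbK, hb⟩, rfl⟩, hdist⟩ :=
    Metric.mem_closure_iff.1 (hball hw) (r / 4) (by positivity)
  rw [mem_closedBall_zero_iff] at ha hb
  have hscale {u : E} (hu : ‖u‖ ≤ 1) : ‖c • u‖ ≤ c := by
    rw [norm_smul_of_nonneg hc.le]
    exact mul_le_of_le_one_right hc.le hu
  refine ⟨c • a, K.smul_mem haK hc.le, c • b, K.smul_mem hbK hc.le, hscale ha, hscale hb, ?_⟩
  calc ‖v - (c • a - c • b)‖ = c * dist (c⁻¹ • v) (a - b) := by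
        rw [dist_eq_norm, ← norm_smul_of_nonneg hc.le, smul_sub, smul_sub, smul_inv_smul₀ hc.ne']
    _ ≤ c * (r / 4) := by gcongr
    _ = ‖v‖ / 2 := by rw [hc_def]; field_simp; ring

theorem hasSum_mem {a : ℕ → E} {s : E} (hs : HasSum a s) (ha : ∀ n, a n ∈ K) : s ∈ K :=
  K.isClosed.mem_of_tendsto hs (Eventually.of_forall fun _ ↦ Submodule.sum_mem _ fun n _ ↦ ha n)

theorem exists_hasSum_mem_of_norm_le_geometric [CompleteSpace E] {a : ℕ → E} {c : ℝ}
    (ha : ∀ n, a n ∈ K) (hnorm : ∀ n, ‖a n‖ ≤ c * (1 / 2) ^ n) :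
    ∃ s ∈ K, HasSum a s ∧ ‖s‖ ≤ 2 * c := by
  have hgeom : HasSum (fun n : ℕ ↦ c * (1 / 2) ^ n) (c * 2) := hasSum_geometric_two.mul_left c
  have hs := (Summable.of_norm_bounded hgeom.summable hnorm).hasSum
  refine ⟨_, K.hasSum_mem hs ha, hs, ?_⟩
  linarith [tsum_of_norm_bounded hgeom hnorm]

theorem exists_sub_eq_of_approx [CompleteSpace E] {C : ℝ} (hC : 0 ≤ C)
    (happrox : ∀ v : E, ∃ y ∈ K, ∃ z ∈ K,
      ‖y‖ ≤ C * ‖v‖ ∧ ‖z‖ ≤ C * ‖v‖ ∧ ‖v - (y - z)‖ ≤ ‖v‖ / 2) (x : E) :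
    ∃ y ∈ K, ∃ z ∈ K, x = y - z ∧ ‖y‖ + ‖z‖ ≤ 4 * C * ‖x‖ := by
  choose y hyK z hzK hy hz hres using happrox
  -- `h v` is the part of `v` left undecomposed by one approximation step.
  set h : E → E := fun v ↦ v - (y v - z v)
  have hiter : ∀ n, ‖h^[n] x‖ ≤ (1 / 2) ^ n * ‖x‖ := by
    intro n
    induction n with
    | zero => simp
    | succ n ih =>
      rw [Function.iterate_succ_apply']
      calc ‖h (h^[n] x)‖ ≤ ‖h^[n] x‖ / 2 := hres _
        _ ≤ (1 / 2) ^ n * ‖x‖ / 2 := by gcongr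
        _ = (1 / 2) ^ (n + 1) * ‖x‖ := by ring
  have hbound {w : E → E} (hw : ∀ v, ‖w v‖ ≤ C * ‖v‖) (n : ℕ) :
      ‖w (h^[n] x)‖ ≤ C * ‖x‖ * (1 / 2) ^ n :=
    calc ‖w (h^[n] x)‖ ≤ C * ((1 / 2) ^ n * ‖x‖) := (hw _).trans (by gcongr; exact hiter n)
      _ = C * ‖x‖ * (1 / 2) ^ n := by ring
  obtain ⟨s, hsK, hs, hsn⟩ :=
    K.exists_hasSum_mem_of_norm_le_geometric (fun n ↦ hyK (h^[n] x)) (hbound hy)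
  obtain ⟨t, htK, ht, htn⟩ :=
    K.exists_hasSum_mem_of_norm_le_geometric (fun n ↦ hzK (h^[n] x)) (hbound hz)
  have hpartial : ∀ n, ∑ k ∈ Finset.range n, (y (h^[k] x) - z (h^[k] x)) = x - h^[n] x := by
    intro n
    induction n with
    | zero => simp
    | succ n ih =>
      rw [Finset.sum_range_succ, ih, Function.iterate_succ_apply']
      simp only [h]
      abel
  have hlim : Tendsto (fun n ↦ x - h^[n] x) atTop (𝓝 (x - 0)) := by
    refine tendsto_const_nhds.sub (squeeze_zero_norm hiter ?_)
    simpa using (tendsto_pow_atTop_nhds_zero_of_lt_one (by norm_num : (0 : ℝ) ≤ 1 / 2)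
      (by norm_num)).mul_const ‖x‖
  have hxst : x = s - t := by
    rw [← sub_zero x]
    refine tendsto_nhds_unique hlim ?_
    simpa only [hpartial] using (hs.sub ht).tendsto_sum_nat
  exact ⟨s, hsK, t, htK, hxst, by linarith⟩

end ProperCone

end

/-- A positively generated ordered Banach space is `α`-generated for some `α > 0`. -/
theorem stmt_1 {E : Type*} [NormedAddCommGroup E] [NormedSpace ℝ E] [CompleteSpace E]
    (P : Set E) (hclosed : IsClosed P) (hconv : Convex ℝ P)
    (hcone : ∀ (t : ℝ), 0 ≤ t → ∀ x ∈ P, t • x ∈ P)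
    (hgen : ∀ x : E, ∃ y ∈ P, ∃ z ∈ P, x = y - z) :
    ∃ α : ℝ, 0 < α ∧ ∀ x : E, ∃ y ∈ P, ∃ z ∈ P, x = y - z ∧ ‖y‖ + ‖z‖ ≤ α * ‖x‖ := by
  obtain ⟨p, hp, -⟩ := hgen 0
  obtain ⟨K, rfl⟩ := exists_properCone_coe_eq hclosed hconv ⟨p, hp⟩ hcone
  obtain ⟨r, hr, hball⟩ := Metric.mem_nhds_iff.1 (K.closure_unitBall_sub_unitBall_mem_nhds hgen)
  exact ⟨4 * (2 / r), by positivity,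
    K.exists_sub_eq_of_approx (by positivity) (K.exists_approx_sub_of_ball_subset_closure hr hball)⟩
end

section
/- Let E be an ordered real Banach space with closed positive cone. E is α-generated for some α > 0 (i.e., every x decomposes as y - z with y, z ≥ 0 and ‖y‖+‖z‖ ≤ α‖x‖) if and only if the closed unit ball of E is contained in α·conv(B₁(E⁺) ∪ (-B₁(E⁺))), where B₁(E⁺) is the unit ball of the positive cone. -/
open Pointwise

private lemma aux_mem_hull {E : Type*} [NormedAddCommGroup E] [NormedSpace ℝ E]
    (P : Set E) (hcone : ∀ (t : ℝ), 0 ≤ t → ∀ x ∈ P, t • x ∈ P)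
    (h0 : (0 : E) ∈ P)
    {y z : E} (hy : y ∈ P) (hz : z ∈ P) (hnorm : ‖y‖ + ‖z‖ ≤ 1) :
    y - z ∈ convexHull ℝ ((P ∩ Metric.closedBall 0 1) ∪ -(P ∩ Metric.closedBall 0 1)) := by
  classical
  set S := (P ∩ Metric.closedBall (0:E) 1) ∪ -(P ∩ Metric.closedBall (0:E) 1) with hS
  set u : E := if y = 0 then 0 else ‖y‖⁻¹ • y with hu
  set v : E := if z = 0 then 0 else ‖z‖⁻¹ • z with hv
  have huy : ‖y‖ • u = y := by
    by_cases hy0 : y = 0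
    · simp [hu, hy0]
    · rw [hu, if_neg hy0, smul_smul, mul_inv_cancel₀ (norm_ne_zero_iff.mpr hy0), one_smul]
  have hvz : ‖z‖ • v = z := by
    by_cases hz0 : z = 0
    · simp [hv, hz0]
    · rw [hv, if_neg hz0, smul_smul, mul_inv_cancel₀ (norm_ne_zero_iff.mpr hz0), one_smul]
  have huS : u ∈ S := by
    by_cases hy0 : y = 0
    · rw [hu, if_pos hy0]
      exact Or.inl ⟨h0, by simp⟩
    · rw [hu, if_neg hy0]
      refine Or.inl ⟨hcone _ (inv_nonneg.mpr (norm_nonneg y)) y hy, ?_⟩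
      rw [Metric.mem_closedBall, dist_zero_right, norm_smul, norm_inv, norm_norm,
        inv_mul_cancel₀ (norm_ne_zero_iff.mpr hy0)]
  have hvS : (-v) ∈ S := by
    refine Or.inr ?_
    rw [Set.mem_neg, neg_neg]
    by_cases hz0 : z = 0
    · rw [hv, if_pos hz0]
      exact ⟨h0, by simp⟩
    · rw [hv, if_neg hz0]
      refine ⟨hcone _ (inv_nonneg.mpr (norm_nonneg z)) z hz, ?_⟩
      rw [Metric.mem_closedBall, dist_zero_right, norm_smul, norm_inv, norm_norm,
        inv_mul_cancel₀ (norm_ne_zero_iff.mpr hz0)]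
  have h0S : (0 : E) ∈ S := Or.inl ⟨h0, by simp⟩
  have hc : Convex ℝ (convexHull ℝ S) := convex_convexHull ℝ S
  have key : y - z = ‖y‖ • u + ‖z‖ • (-v) + (1 - ‖y‖ - ‖z‖) • (0 : E) := by
    rw [smul_zero, add_zero, smul_neg, huy, hvz]; abel
  rw [key]
  have hw : ∀ i ∈ (Finset.univ : Finset (Fin 3)),
      (0:ℝ) ≤ ![‖y‖, ‖z‖, 1 - ‖y‖ - ‖z‖] i := by
    intro i _
    fin_cases i
    · simpa using norm_nonneg y
    · simpa using norm_nonneg z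
    · show (0:ℝ) ≤ 1 - ‖y‖ - ‖z‖
      linarith
  have hsum : ∑ i : Fin 3, ![‖y‖, ‖z‖, 1 - ‖y‖ - ‖z‖] i = 1 := by
    rw [Fin.sum_univ_three]
    simp only [Matrix.cons_val_zero, Matrix.cons_val_one, Matrix.head_cons,
      Matrix.cons_val_two, Matrix.tail_cons]
    ring
  have hpts : ∀ i ∈ (Finset.univ : Finset (Fin 3)),
      ![u, -v, (0:E)] i ∈ convexHull ℝ S := by
    intro i _
    fin_cases i
    · exact subset_convexHull ℝ S huS
    · exact subset_convexHull ℝ S hvS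
    · exact subset_convexHull ℝ S h0S
  have := hc.sum_mem hw hsum hpts
  simpa [Fin.sum_univ_three] using this

/-- `α`-generation is equivalent to the inclusion of the unit ball of `E` in
`α · conv(B₁(E⁺) ∪ (-B₁(E⁺)))`. -/
theorem stmt_2 {E : Type*} [NormedAddCommGroup E] [NormedSpace ℝ E]
    (P : Set E) (hclosed : IsClosed P) (hconv : Convex ℝ P)
    (hcone : ∀ (t : ℝ), 0 ≤ t → ∀ x ∈ P, t • x ∈ P)
    (α : ℝ) (hα : 0 < α) :
    (∀ x : E, ∃ y ∈ P, ∃ z ∈ P, x = y - z ∧ ‖y‖ + ‖z‖ ≤ α * ‖x‖) ↔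
      Metric.closedBall (0 : E) 1 ⊆
        α • convexHull ℝ ((P ∩ Metric.closedBall 0 1) ∪ -(P ∩ Metric.closedBall 0 1)) := by
  set S := (P ∩ Metric.closedBall (0:E) 1) ∪ -(P ∩ Metric.closedBall (0:E) 1) with hS
  constructor
  · intro h x hx
    rw [Metric.mem_closedBall, dist_zero_right] at hx
    obtain ⟨y, hy, z, hz, hxyz, hnorm⟩ := h x
    have h0 : (0:E) ∈ P := by simpa using hcone 0 le_rfl y hy
    rw [Set.mem_smul_set_iff_inv_smul_mem₀ hα.ne']
    have hy' : α⁻¹ • y ∈ P := hcone _ (by positivity) y hy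
    have hz' : α⁻¹ • z ∈ P := hcone _ (by positivity) z hz
    have heq : α⁻¹ • x = α⁻¹ • y - α⁻¹ • z := by rw [hxyz, smul_sub]
    have hn : ‖α⁻¹ • y‖ + ‖α⁻¹ • z‖ ≤ 1 := by
      rw [norm_smul, norm_smul, norm_inv, Real.norm_eq_abs, abs_of_pos hα, ← mul_add]
      calc α⁻¹ * (‖y‖ + ‖z‖) ≤ α⁻¹ * (α * ‖x‖) := by
            apply mul_le_mul_of_nonneg_left hnorm (by positivity)
        _ = ‖x‖ := by field_simp
        _ ≤ 1 := hx
    rw [heq]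
    exact aux_mem_hull P hcone h0 hy' hz' hn
  · intro h x
    have h0mem : (0:E) ∈ α • convexHull ℝ S := h (by simp)
    have hPne : P.Nonempty := by
      obtain ⟨c, hc, -⟩ := h0mem
      have hSne : S.Nonempty := convexHull_nonempty_iff.mp ⟨c, hc⟩
      obtain ⟨w, hw | hw⟩ := hSne
      · exact ⟨w, hw.1⟩
      · rw [Set.mem_neg] at hw; exact ⟨-w, hw.1⟩
    obtain ⟨p, hp⟩ := hPne
    have h0 : (0:E) ∈ P := by simpa using hcone 0 le_rfl p hp
    by_cases hx0 : x = 0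
    · exact ⟨0, h0, 0, h0, by simp [hx0], by simp [hx0]⟩
    · have hxn : (0:ℝ) < ‖x‖ := norm_pos_iff.mpr hx0
      have hmem : ‖x‖⁻¹ • x ∈ Metric.closedBall (0:E) 1 := by
        simp [norm_smul, inv_mul_cancel₀ hxn.ne']
      have hmem2 := h hmem
      rw [Set.mem_smul_set_iff_inv_smul_mem₀ hα.ne'] at hmem2
      set D : Set E := {w | ∃ y ∈ P, ∃ z ∈ P, w = y - z ∧ ‖y‖ + ‖z‖ ≤ 1} with hD
      have hDconv : Convex ℝ D := by
        rintro w₁ ⟨y₁, hy₁, z₁, hz₁, rfl, hn₁⟩ w₂ ⟨y₂, hy₂, z₂, hz₂, rfl, hn₂⟩ a b ha hb hab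
        refine ⟨a • y₁ + b • y₂, hconv hy₁ hy₂ ha hb hab,
          a • z₁ + b • z₂, hconv hz₁ hz₂ ha hb hab, by module, ?_⟩
        calc ‖a • y₁ + b • y₂‖ + ‖a • z₁ + b • z₂‖
            ≤ (a * ‖y₁‖ + b * ‖y₂‖) + (a * ‖z₁‖ + b * ‖z₂‖) := by
              gcongr <;> refine (norm_add_le _ _).trans ?_ <;>
                simp [norm_smul, abs_of_nonneg ha, abs_of_nonneg hb]
          _ = a * (‖y₁‖ + ‖z₁‖) + b * (‖y₂‖ + ‖z₂‖) := by ring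
          _ ≤ a * 1 + b * 1 := by gcongr
          _ = 1 := by rw [mul_one, mul_one, hab]
      have hSD : S ⊆ D := by
        rintro w (⟨hwP, hwB⟩ | hw)
        · rw [Metric.mem_closedBall, dist_zero_right] at hwB
          exact ⟨w, hwP, 0, h0, by simp, by simpa⟩
        · rw [Set.mem_neg] at hw
          obtain ⟨hwP, hwB⟩ := hw
          rw [Metric.mem_closedBall, dist_zero_right] at hwB
          exact ⟨0, h0, -w, hwP, by simp, by simpa using hwB⟩
      have hmemD : α⁻¹ • ‖x‖⁻¹ • x ∈ D := convexHull_min hSD hDconv hmem2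
      obtain ⟨y, hy, z, hz, heq, hn⟩ := hmemD
      refine ⟨(α * ‖x‖) • y, hcone _ (by positivity) y hy,
        (α * ‖x‖) • z, hcone _ (by positivity) z hz, ?_, ?_⟩
      · rw [← smul_sub, ← heq, smul_smul, smul_smul,
          show α * ‖x‖ * α⁻¹ * ‖x‖⁻¹ = (α * α⁻¹) * (‖x‖ * ‖x‖⁻¹) by ring,
          mul_inv_cancel₀ hα.ne', mul_inv_cancel₀ hxn.ne', one_mul, one_smul]
      · rw [norm_smul, norm_smul, Real.norm_eq_abs, abs_of_pos (by positivity), ← mul_add]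
        calc α * ‖x‖ * (‖y‖ + ‖z‖) ≤ α * ‖x‖ * 1 := by
              apply mul_le_mul_of_nonneg_left hn (by positivity)
          _ = α * ‖x‖ := mul_one _
end

section
/- Let L ⊆ K be compact convex sets containing 0 in a Hausdorff locally convex real topological vector space E. The following are equivalent: (i) there is a constant c > 0 such that |L|_d ≥ c·|K|_d for all d ∈ E with |L|_d > 0; (ii) there is a constant C > 0 such that (K - K) ∩ span_ℝ L ⊆ C·(L - L). -/
open Pointwise

/-!
Write `A = L - L` and `B = K - K`. Being convex and balanced, `A` absorbs every point of
`span ℝ L`, so on that subspace `gauge A` is a genuine infimum rather than the junk value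
`sInf ∅ = 0`. The inclusion `B ∩ span ℝ L ⊆ C • A` is then equivalent to
`gauge A ≤ C * gauge B` on the subspace, since cutting `B` down to a subspace containing the
point does not change its gauge there.
-/

section Gauge

variable {E : Type*} [AddCommGroup E] [Module ℝ E] {s t : Set E} {x : E}

lemma nonempty_gauge_set_of_smul_mem {r : ℝ} (hr : 0 < r) (hx : r • x ∈ s) :
    {a : ℝ | 0 < a ∧ x ∈ a • s}.Nonempty :=
  ⟨r⁻¹, inv_pos.2 hr, (Set.mem_smul_set_iff_inv_smul_mem₀ (inv_ne_zero hr.ne') _ _).2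
    (by rwa [inv_inv])⟩

lemma gauge_le_gauge_of_subset_of_smul_mem (hst : s ⊆ t) {r : ℝ} (hr : 0 < r)
    (hx : r • x ∈ s) : gauge t x ≤ gauge s x :=
  csInf_le_csInf ⟨0, fun _ ha => ha.1.le⟩ (nonempty_gauge_set_of_smul_mem hr hx)
    fun _ ⟨ha, hxa⟩ => ⟨ha, Set.smul_set_mono hst hxa⟩

lemma Balanced.mem_smul_of_gauge_lt (hs : Balanced ℝ s) {r a : ℝ} (hr : 0 < r)
    (hx : r • x ∈ s) (h : gauge s x < a) : x ∈ a • s := by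
  obtain ⟨b, ⟨hb, hxb⟩, hba⟩ := exists_lt_of_csInf_lt (nonempty_gauge_set_of_smul_mem hr hx) h
  refine hs.smul_mono ?_ hxb
  rw [Real.norm_of_nonneg hb.le, Real.norm_of_nonneg (hb.trans hba).le]
  exact hba.le

lemma gauge_inter_submodule (S : Submodule ℝ E) (hx : x ∈ S) : gauge (s ∩ S) x = gauge s x := by
  refine congrArg sInf (Set.ext fun a => and_congr_right fun ha => ?_)
  simp only [Set.mem_smul_set_iff_inv_smul_mem₀ ha.ne', Set.mem_inter_iff, SetLike.mem_coe,
    S.smul_mem _ hx, and_true]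

lemma exists_pos_mem_smul_of_mem_span (hconv : Convex ℝ s) (hbal : Balanced ℝ s)
    (h0 : (0 : E) ∈ s) (hx : x ∈ Submodule.span ℝ s) : ∃ r : ℝ, 0 < r ∧ x ∈ r • s := by
  induction hx using Submodule.span_induction with
  | mem y hy => exact ⟨1, one_pos, by rwa [one_smul]⟩
  | zero => exact ⟨1, one_pos, by rwa [one_smul]⟩
  | add y z _ _ hy hz =>
      obtain ⟨r, hr, hyr⟩ := hy
      obtain ⟨q, hq, hzq⟩ := hz
      exact ⟨r + q, by positivity, by
        rw [hconv.add_smul hr.le hq.le]; exact Set.add_mem_add hyr hzq⟩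
  | smul c y _ hy =>
      obtain ⟨r, hr, hyr⟩ := hy
      refine ⟨|c| * r + 1, by positivity, hbal.smul_mono (a := c * r) ?_ ?_⟩
      · rw [Real.norm_eq_abs, Real.norm_eq_abs, abs_mul, abs_of_pos hr]
        exact (lt_add_one _).le.trans (le_abs_self _)
      · rw [← smul_smul]; exact Set.smul_mem_smul_set hyr

end Gauge

theorem stmt_9_general {E : Type*} [AddCommGroup E] [Module ℝ E]
    (K L : Set E) (hLconv : Convex ℝ L) (h0 : (0 : E) ∈ L) (hLK : L ⊆ K) :
    (∃ c : ℝ, 0 < c ∧ ∀ d : E, (∃ t : ℝ, 0 < t ∧ t • d ∈ L - L) →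
        c * gauge (L - L) d ≤ gauge (K - K) d) ↔
      (∃ C : ℝ, 0 < C ∧ (K - K) ∩ (Submodule.span ℝ L : Set E) ⊆ C • (L - L)) := by
  set S := Submodule.span ℝ L
  have hconv : Convex ℝ (L - L) := hLconv.sub hLconv
  have hbal : Balanced ℝ (L - L) := (balanced_iff_neg_mem hconv).2 fun _ ⟨a, ha, b, hb, h⟩ =>
    ⟨b, hb, a, ha, by rw [← h, neg_sub]⟩
  have hLS : L - L ⊆ S := Set.sub_subset_iff.2 fun a ha b hb =>
    S.sub_mem (Submodule.subset_span ha) (Submodule.subset_span hb)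
  constructor
  · rintro ⟨c, hc, hwidth⟩
    refine ⟨2 / c, by positivity, fun x ⟨hxK, hxS⟩ => ?_⟩
    have hspan : S ≤ Submodule.span ℝ (L - L) :=
      Submodule.span_mono fun a ha => ⟨a, ha, 0, h0, sub_zero a⟩
    obtain ⟨r, hr, hxr⟩ := exists_pos_mem_smul_of_mem_span hconv hbal ⟨0, h0, 0, h0, sub_zero 0⟩
      (hspan hxS)
    have hrx : r⁻¹ • x ∈ L - L := (Set.mem_smul_set_iff_inv_smul_mem₀ hr.ne' _ _).1 hxr
    have hgaugeL : c * gauge (L - L) x ≤ gauge (K - K) x := hwidth x ⟨_, inv_pos.2 hr, hrx⟩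
    have hgaugeK : gauge (K - K) x ≤ 1 := gauge_le_one_of_mem hxK
    refine hbal.mem_smul_of_gauge_lt (inv_pos.2 hr) hrx ?_
    rw [lt_div_iff₀ hc]
    linarith
  · rintro ⟨C, hC, hsub⟩
    refine ⟨C⁻¹, inv_pos.2 hC, fun d ⟨t, ht, htd⟩ => ?_⟩
    have hdS : d ∈ S := by
      simpa [smul_smul, ht.ne'] using S.smul_mem t⁻¹ (hLS htd)
    calc C⁻¹ * gauge (L - L) d = gauge (C • (L - L)) d := by
          rw [gauge_smul_left_of_nonneg hC.le, Pi.smul_apply, smul_eq_mul]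
      _ ≤ gauge ((K - K) ∩ S) d :=
          gauge_le_gauge_of_subset_of_smul_mem hsub ht ⟨Set.sub_subset_sub hLK hLK htd, hLS htd⟩
      _ = gauge (K - K) d := gauge_inter_submodule S hdS

/-- For compact convex `0 ∈ L ⊆ K`, the width comparison `|L|_d ≥ c|K|_d` (for `d`
with `|L|_d > 0`, expressed via Minkowski gauges as `c · gauge (L-L) d ≤ gauge (K-K) d`)
holds for some `c > 0` if and only if `(K - K) ∩ span ℝ L ⊆ C • (L - L)` for some `C > 0`. -/
theorem stmt_9 {E : Type*} [AddCommGroup E] [Module ℝ E] [TopologicalSpace E]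
    [IsTopologicalAddGroup E] [ContinuousSMul ℝ E] [LocallyConvexSpace ℝ E] [T2Space E]
    (K L : Set E) (hK : IsCompact K) (hKconv : Convex ℝ K)
    (hL : IsCompact L) (hLconv : Convex ℝ L) (h0 : (0 : E) ∈ L) (hLK : L ⊆ K) :
    (∃ c : ℝ, 0 < c ∧ ∀ d : E, (∃ t : ℝ, 0 < t ∧ t • d ∈ L - L) →
        c * gauge (L - L) d ≤ gauge (K - K) d) ↔
      (∃ C : ℝ, 0 < C ∧ (K - K) ∩ (Submodule.span ℝ L : Set E) ⊆ C • (L - L)) :=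
  stmt_9_general K L hLconv h0 hLK
end

section
/- Let φ : E → F be a bounded linear map of Banach spaces and C > 0. Then B₁(F) ⊆ C·closure(φ(B₁(E))) if and only if the adjoint φ* : F* → E* is bounded below by 1/C, i.e., ‖φ*(f)‖ ≥ ‖f‖/C for all f ∈ F*. -/
open Pointwise

/-- `B₁(F) ⊆ C · closure (φ(B₁(E)))` if and only if the adjoint `φ* : F* → E*`,
`f ↦ f ∘ φ`, is bounded below by `1/C`. -/
theorem stmt_11 {E F : Type*} [NormedAddCommGroup E] [NormedSpace ℝ E] [CompleteSpace E]
    [NormedAddCommGroup F] [NormedSpace ℝ F] [CompleteSpace F]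
    (φ : E →L[ℝ] F) (C : ℝ) (hC : 0 < C) :
    (Metric.closedBall (0 : F) 1 ⊆ C • closure (φ '' Metric.closedBall 0 1)) ↔
      ∀ f : F →L[ℝ] ℝ, ‖f‖ / C ≤ ‖f.comp φ‖ := by
  constructor
  · intro hsub f
    rw [div_le_iff₀ hC]
    have key : ∀ y ∈ Metric.closedBall (0 : F) 1, ‖f y‖ ≤ ‖f.comp φ‖ * C := by
      intro y hy
      obtain ⟨z, hz, rfl⟩ := hsub hy
      have hzK : ‖f z‖ ≤ ‖f.comp φ‖ := by
        have hcl : closure (φ '' Metric.closedBall 0 1) ⊆ {w | ‖f w‖ ≤ ‖f.comp φ‖} := by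
          apply closure_minimal
          · rintro _ ⟨x, hx, rfl⟩
            have : ‖(f.comp φ) x‖ ≤ ‖f.comp φ‖ * ‖x‖ := (f.comp φ).le_opNorm x
            simp only [Metric.mem_closedBall, dist_zero_right] at hx
            calc ‖f (φ x)‖ = ‖(f.comp φ) x‖ := rfl
              _ ≤ ‖f.comp φ‖ * ‖x‖ := this
              _ ≤ ‖f.comp φ‖ * 1 := by
                  exact mul_le_mul_of_nonneg_left hx (norm_nonneg _)
              _ = ‖f.comp φ‖ := mul_one _
          · exact isClosed_le (by continuity) continuous_const
        exact hcl hz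
      calc ‖f (C • z)‖ = ‖C‖ * ‖f z‖ := by rw [map_smul, norm_smul]
        _ = C * ‖f z‖ := by rw [Real.norm_of_nonneg hC.le]
        _ ≤ C * ‖f.comp φ‖ := mul_le_mul_of_nonneg_left hzK hC.le
        _ = ‖f.comp φ‖ * C := mul_comm _ _
    exact ContinuousLinearMap.opNorm_le_of_unit_norm
      (mul_nonneg (norm_nonneg _) hC.le)
      (fun y hy => key y (by simp [hy]))
  · intro hbdd y hy
    by_contra hmem
    have hconv : Convex ℝ (C • closure (φ '' Metric.closedBall (0:E) 1)) :=
      (((convex_closedBall (0:E) 1).is_linear_image φ.toLinearMap.isLinear).closure).smul C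
    have hclosed : IsClosed (C • closure (φ '' Metric.closedBall (0:E) 1)) :=
      isClosed_closure.smul_of_ne_zero hC.ne'
    obtain ⟨f, u, hfu, huf⟩ := geometric_hahn_banach_closed_point hconv hclosed hmem
    have h0 : (0 : F) ∈ C • closure (φ '' Metric.closedBall (0:E) 1) := by
      refine ⟨0, subset_closure ⟨0, by simp, by simp⟩, by simp⟩
    have hu0 : 0 < u := by have := hfu 0 h0; simpa using this
    have hcomp : ‖f.comp φ‖ ≤ u / C := by
      apply ContinuousLinearMap.opNorm_le_of_unit_norm (le_of_lt (div_pos hu0 hC))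
      intro x hx
      have hx' : x ∈ Metric.closedBall (0:E) 1 := by simp [hx]
      have h1 : C • φ x ∈ C • closure (φ '' Metric.closedBall (0:E) 1) :=
        Set.smul_mem_smul_set (subset_closure ⟨x, hx', rfl⟩)
      have h2 : C • φ (-x) ∈ C • closure (φ '' Metric.closedBall (0:E) 1) :=
        Set.smul_mem_smul_set (subset_closure ⟨-x, by simpa using hx', rfl⟩)
      have g1 := hfu _ h1
      have g2 := hfu _ h2
      rw [map_smul, smul_eq_mul] at g1 g2
      rw [map_neg] at g2
      simp only [map_neg, mul_neg] at g2
      rw [Real.norm_eq_abs, abs_le]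
      have hfc : (f.comp φ) x = f (φ x) := rfl
      constructor
      · rw [hfc, neg_le, le_div_iff₀ hC]
        linarith
      · rw [hfc, le_div_iff₀ hC]
        linarith
    have hfy : f y ≤ ‖f‖ := by
      calc f y ≤ ‖f y‖ := le_abs_self _
        _ ≤ ‖f‖ * ‖y‖ := f.le_opNorm y
        _ ≤ ‖f‖ * 1 := by
            refine mul_le_mul_of_nonneg_left ?_ (norm_nonneg _)
            simpa using hy
        _ = ‖f‖ := mul_one _
    have := hbdd f
    rw [div_le_iff₀ hC] at this
    have : ‖f‖ ≤ u := by
      calc ‖f‖ ≤ ‖f.comp φ‖ * C := this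
        _ ≤ (u / C) * C := mul_le_mul_of_nonneg_right hcomp hC.le
        _ = u := div_mul_cancel₀ u hC.ne'
    linarith
end

section
/- Let X be an ordered Banach space with closed positive cone, and let J ⊆ X be the kernel of a bounded positive linear map φ : X → Y into an ordered Banach space Y whose positive cone is closed and satisfies Y⁺ ∩ (-Y⁺) = {0}. Define the positive cone on X/J as the closure of {x + J : x ∈ X⁺} in the quotient norm. Then (X/J)⁺ ∩ (-(X/J)⁺) = {0}; i.e., the quotient order is a partial order. -/
/-- If `φ : X → Y` is a bounded positive linear map into an ordered Banach space whose
closed cone is proper, and `J = ker φ`, then the quotient cone on `X / J` (the closure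
of the image of `X⁺`) is proper: `(X/J)⁺ ∩ (-(X/J)⁺) = {0}`. -/
theorem stmt_12 {X Y : Type*} [NormedAddCommGroup X] [NormedSpace ℝ X]
    [NormedAddCommGroup Y] [NormedSpace ℝ Y] [CompleteSpace X] [CompleteSpace Y]
    (XP : Set X) (hXPclosed : IsClosed XP) (hXPconv : Convex ℝ XP)
    (hXPcone : ∀ (t : ℝ), 0 ≤ t → ∀ x ∈ XP, t • x ∈ XP)
    (YP : Set Y) (hYPclosed : IsClosed YP) (hYPconv : Convex ℝ YP)
    (hYPcone : ∀ (t : ℝ), 0 ≤ t → ∀ y ∈ YP, t • y ∈ YP)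
    (hYPproper : ∀ y : Y, y ∈ YP → -y ∈ YP → y = 0)
    (φ : X →L[ℝ] Y) (hpos : ∀ x ∈ XP, φ x ∈ YP) :
    ∀ v : X ⧸ LinearMap.ker (φ : X →ₗ[ℝ] Y),
      v ∈ closure ((LinearMap.ker (φ : X →ₗ[ℝ] Y)).mkQ '' XP) →
      -v ∈ closure ((LinearMap.ker (φ : X →ₗ[ℝ] Y)).mkQ '' XP) → v = 0 := by
  set J := LinearMap.ker (φ : X →ₗ[ℝ] Y) with hJ
  let ψ : X ⧸ J →ₗ[ℝ] Y := J.liftQ (φ : X →ₗ[ℝ] Y) le_rfl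
  have hψc : Continuous ψ := by
    rw [J.isOpenQuotientMap_mkQ.isQuotientMap.continuous_iff]
    have h : (ψ ∘ J.mkQ) = φ := by ext x; simp [ψ]
    rw [h]; exact φ.continuous
  have key : ∀ w ∈ closure (J.mkQ '' XP), ψ w ∈ YP := by
    intro w hw
    have h : ψ w ∈ closure YP := by
      refine map_mem_closure hψc hw ?_
      rintro _ ⟨x, hx, rfl⟩
      simpa [ψ] using hpos x hx
    rwa [hYPclosed.closure_eq] at h
  intro v hv hnv
  have h1 := key v hv
  have h2 := key (-v) hnv
  rw [map_neg] at h2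
  have hz : ψ v = 0 := hYPproper _ h1 h2
  obtain ⟨x, rfl⟩ := J.mkQ_surjective v
  have hx0 : φ x = 0 := by simpa [ψ] using hz
  have : x ∈ J := hx0
  simpa [Submodule.Quotient.mk_eq_zero] using this
end

section
/- Let C([0,1], ℝ) be ordered by the cone P of functions that are both nonnegative and convex on [0,1]. Then P - P is dense in C([0,1], ℝ) but P - P ≠ C([0,1], ℝ). (Density: P - P contains all C² functions since any C² function f can be written as (f + M·x²) - M·x² for large M, and these are differences of convex functions which decompose into the cone after adding affine pieces; properness: every element of P - P is differentiable almost everywhere on (0,1), while there exist continuous nowhere differentiable functions.) -/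
open Pointwise Set Filter Topology Real

/-- The model cone: continuous maps on `[0,1]` arising from functions nonnegative and
convex on `[0,1]`. -/
private lemma aux_mem_P
    (P : Set C(Set.Icc (0 : ℝ) 1, ℝ))
    (hP : P = {f : C(Set.Icc (0 : ℝ) 1, ℝ) |
      (∀ x, 0 ≤ f x) ∧
      ∀ (x y : Set.Icc (0 : ℝ) 1) (a b : ℝ), 0 ≤ a → 0 ≤ b → a + b = 1 →
        ∀ (h : a * (x : ℝ) + b * (y : ℝ) ∈ Set.Icc (0 : ℝ) 1),
          f ⟨a * (x : ℝ) + b * (y : ℝ), h⟩ ≤ a * f x + b * f y})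
    (F : ℝ → ℝ) (hF0 : ∀ x ∈ Set.Icc (0:ℝ) 1, 0 ≤ F x)
    (hFc : ConvexOn ℝ (Set.Icc (0:ℝ) 1) F)
    (f : C(Set.Icc (0 : ℝ) 1, ℝ)) (hf : ∀ x : Set.Icc (0:ℝ) 1, f x = F x) :
    f ∈ P := by
  subst hP
  refine ⟨fun x => by rw [hf]; exact hF0 x x.2, ?_⟩
  intro x y a b ha hb hab h
  rw [hf, hf, hf]
  have := hFc.2 x.2 y.2 ha hb hab
  simpa [smul_eq_mul] using this

/-- From membership in the cone, convexity of the `projIcc` extension. -/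
private lemma aux_convexOn
    (P : Set C(Set.Icc (0 : ℝ) 1, ℝ))
    (hP : P = {f : C(Set.Icc (0 : ℝ) 1, ℝ) |
      (∀ x, 0 ≤ f x) ∧
      ∀ (x y : Set.Icc (0 : ℝ) 1) (a b : ℝ), 0 ≤ a → 0 ≤ b → a + b = 1 →
        ∀ (h : a * (x : ℝ) + b * (y : ℝ) ∈ Set.Icc (0 : ℝ) 1),
          f ⟨a * (x : ℝ) + b * (y : ℝ), h⟩ ≤ a * f x + b * f y})
    (g : C(Set.Icc (0 : ℝ) 1, ℝ)) (hg : g ∈ P) :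
    ConvexOn ℝ (Set.Icc (0:ℝ) 1)
      (fun t => g (Set.projIcc 0 1 (by norm_num) t)) := by
  subst hP
  refine ⟨convex_Icc 0 1, ?_⟩
  intro x hx y hy a b ha hb hab
  have hmem : a * x + b * y ∈ Set.Icc (0:ℝ) 1 := by
    have := (convex_Icc (0:ℝ) 1) hx hy ha hb hab
    simpa [smul_eq_mul] using this
  have key := hg.2 ⟨x, hx⟩ ⟨y, hy⟩ a b ha hb hab hmem
  have hxy : a • x + b • y = a * x + b * y := by simp [smul_eq_mul]
  have e0 : Set.projIcc (0:ℝ) 1 (by norm_num) (a * x + b * y) = ⟨a * x + b * y, hmem⟩ :=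
    Set.projIcc_of_mem _ hmem
  have e1 : Set.projIcc (0:ℝ) 1 (by norm_num) x = ⟨x, hx⟩ := Set.projIcc_of_mem _ hx
  have e2 : Set.projIcc (0:ℝ) 1 (by norm_num) y = ⟨y, hy⟩ := Set.projIcc_of_mem _ hy
  simp only [hxy, e0, e1, e2, smul_eq_mul]
  simpa using key

/-- The one-sided slope limit for a convex function on `[0,1]` at `1/2`. -/
private lemma aux_slope_tendsto {G : ℝ → ℝ} (hG : ConvexOn ℝ (Set.Icc (0:ℝ) 1) G) :
    ∃ L, Tendsto (fun t => (G t - G (1/2)) / (t - 1/2)) (𝓝[>] (1/2 : ℝ)) (𝓝 L) := by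
  set s : ℝ → ℝ := fun t => (G t - G (1/2)) / (t - 1/2) with hs
  have hhalf : (1/2 : ℝ) ∈ Set.Icc (0:ℝ) 1 := by norm_num
  have hmono : MonotoneOn s (Set.Ioo (1/2 : ℝ) 1) := by
    intro x hx y hy hxy
    have hxI : x ∈ Set.Icc (0:ℝ) 1 := ⟨by linarith [hx.1], hx.2.le⟩
    have hyI : y ∈ Set.Icc (0:ℝ) 1 := ⟨by linarith [hy.1], hy.2.le⟩
    exact hG.secant_mono hhalf hxI hyI (ne_of_gt hx.1) (ne_of_gt hy.1) hxy
  have hbdd : BddBelow (s '' Set.Ioo (1/2 : ℝ) 1) := by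
    refine ⟨(G 0 - G (1/2)) / (0 - 1/2), ?_⟩
    rintro _ ⟨t, ht, rfl⟩
    have htI : t ∈ Set.Icc (0:ℝ) 1 := ⟨by linarith [ht.1], ht.2.le⟩
    exact hG.secant_mono hhalf ⟨le_refl 0, by norm_num⟩ htI (by norm_num)
      (ne_of_gt ht.1) (by linarith [ht.1])
  have hne : (Set.Ioo (1/2 : ℝ) 1).Nonempty := ⟨3/4, by norm_num⟩
  exact ⟨_, hmono.tendsto_nhdsWithin_Ioo_right hne hbdd⟩

/-- In `C([0,1], ℝ)`, let `P` be the cone of functions that are nonnegative and convex.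
Then `P - P` is dense but `P - P ≠ C([0,1], ℝ)`. -/
theorem stmt_15
    (P : Set C(Set.Icc (0 : ℝ) 1, ℝ))
    (hP : P = {f : C(Set.Icc (0 : ℝ) 1, ℝ) |
      (∀ x, 0 ≤ f x) ∧
      ∀ (x y : Set.Icc (0 : ℝ) 1) (a b : ℝ), 0 ≤ a → 0 ≤ b → a + b = 1 →
        ∀ (h : a * (x : ℝ) + b * (y : ℝ) ∈ Set.Icc (0 : ℝ) 1),
          f ⟨a * (x : ℝ) + b * (y : ℝ), h⟩ ≤ a * f x + b * f y}) :
    Dense (P - P) ∧ P - P ≠ Set.univ := by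
  constructor
  · -- Density
    -- every polynomial function lies in `P - P`
    have hzero : (0 : C(Set.Icc (0:ℝ) 1, ℝ)) ∈ P := by
      refine aux_mem_P P hP (fun _ => 0) (fun _ _ => le_refl 0)
        (convexOn_const 0 (convex_Icc 0 1)) 0 (fun x => rfl)
    have hmon : ∀ (n : ℕ) (c : ℝ), 0 ≤ c →
        ((Polynomial.monomial n c).toContinuousMapOn (Set.Icc (0:ℝ) 1)) ∈ P := by
      intro n c hc
      refine aux_mem_P P hP (fun x => c * x ^ n) ?_ ?_ _ ?_
      · intro x hx
        exact mul_nonneg hc (pow_nonneg hx.1 n)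
      · have h1 : ConvexOn ℝ (Set.Icc (0:ℝ) 1) (fun x : ℝ => x ^ n) :=
          (convexOn_pow n).subset (fun x hx => hx.1) (convex_Icc 0 1)
        simpa [smul_eq_mul] using h1.smul hc
      · intro x
        simp [Polynomial.toContinuousMapOn, Polynomial.toContinuousMap,
          Polynomial.eval_monomial]
    have hPadd : ∀ f g, f ∈ P → g ∈ P → f + g ∈ P := by
      subst hP
      intro f g hf hg
      refine ⟨fun x => add_nonneg (hf.1 x) (hg.1 x), ?_⟩
      intro x y a b ha hb hab h
      have h1 := hf.2 x y a b ha hb hab h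
      have h2 := hg.2 x y a b ha hb hab h
      simp only [ContinuousMap.add_apply]
      linarith
    have hsub : ∀ p : Polynomial ℝ,
        p.toContinuousMapOn (Set.Icc (0:ℝ) 1) ∈ P - P := by
      intro p
      induction p using Polynomial.induction_on' with
      | add p q hp hq =>
        rw [Set.mem_sub] at hp hq ⊢
        obtain ⟨a, ha, b, hb, hab⟩ := hp
        obtain ⟨c, hc, d, hd, hcd⟩ := hq
        refine ⟨a + c, hPadd a c ha hc, b + d, hPadd b d hb hd, ?_⟩
        have : (p + q).toContinuousMapOn (Set.Icc (0:ℝ) 1)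
            = p.toContinuousMapOn _ + q.toContinuousMapOn _ := by
          ext x; simp [Polynomial.toContinuousMapOn, Polynomial.toContinuousMap]
        rw [this, ← hab, ← hcd]; abel
      | monomial n c =>
        rcases le_or_gt 0 c with hc | hc
        · refine ⟨_, hmon n c hc, 0, hzero, sub_zero _⟩
        · refine ⟨0, hzero, _, hmon n (-c) (by linarith), ?_⟩
          ext x
          simp [Polynomial.toContinuousMapOn, Polynomial.toContinuousMap,
            Polynomial.eval_monomial]
    have hpolysub : (polynomialFunctions (Set.Icc (0:ℝ) 1) : Set C(Set.Icc (0:ℝ) 1, ℝ))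
        ⊆ P - P := by
      intro f hf
      rw [polynomialFunctions_coe] at hf
      obtain ⟨p, rfl⟩ := hf
      exact hsub p
    have hdense : Dense (polynomialFunctions (Set.Icc (0:ℝ) 1) :
        Set C(Set.Icc (0:ℝ) 1, ℝ)) := by
      rw [dense_iff_closure_eq]
      have := congrArg (SetLike.coe) (polynomialFunctions_closure_eq_top 0 1)
      simpa [Subalgebra.topologicalClosure_coe] using this
    exact hdense.mono hpolysub
  · -- Properness
    intro hcontra
    -- the counterexample function
    set ψ : ℝ → ℝ := fun t => (t - 1/2) * Real.sin ((t - 1/2)⁻¹) with hψ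
    have hψc : Continuous ψ := by
      rw [continuous_iff_continuousAt]
      intro t
      by_cases ht : t = 1/2
      · subst ht
        have h0 : ψ (1/2 : ℝ) = 0 := by simp [hψ]
        have hb : ∀ x : ℝ, ‖ψ x‖ ≤ |x - 1/2| := by
          intro x
          rw [hψ]
          simp only [Real.norm_eq_abs, abs_mul]
          calc |x - 1/2| * |Real.sin ((x - 1/2)⁻¹)| ≤ |x - 1/2| * 1 :=
                mul_le_mul_of_nonneg_left (abs_le.mpr ⟨Real.neg_one_le_sin _, Real.sin_le_one _⟩) (abs_nonneg _)
            _ = |x - 1/2| := mul_one _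
        have ht0 : Tendsto (fun x : ℝ => |x - 1/2|) (𝓝 (1/2)) (𝓝 0) := by
          have : Tendsto (fun x : ℝ => |x - 1/2|) (𝓝 (1/2)) (𝓝 |(1/2 : ℝ) - 1/2|) :=
            ((continuous_id.sub continuous_const).abs).continuousAt
          simpa using this
        have key : Tendsto ψ (𝓝 (1/2 : ℝ)) (𝓝 0) := squeeze_zero_norm hb ht0
        show Tendsto ψ (𝓝 (1/2 : ℝ)) (𝓝 (ψ (1/2)))
        rw [h0]; exact key
      · have hne : t - 1/2 ≠ 0 := sub_ne_zero.mpr ht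
        have h1 : ContinuousAt (fun s : ℝ => (s - 1/2)⁻¹) t :=
          (continuousAt_id.sub continuousAt_const).inv₀ hne
        have h2 : ContinuousAt (fun s : ℝ => Real.sin ((s - 1/2)⁻¹)) t :=
          Real.continuous_sin.continuousAt.comp h1
        exact (continuousAt_id.sub continuousAt_const).mul h2
    set f₀ : C(Set.Icc (0:ℝ) 1, ℝ) :=
      ⟨fun x => ψ x, hψc.comp continuous_subtype_val⟩ with hf₀
    have hf₀mem : f₀ ∈ P - P := by rw [hcontra]; trivial
    rw [Set.mem_sub] at hf₀mem
    obtain ⟨q, hq, r, hr, hqr⟩ := hf₀mem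
    set Q : ℝ → ℝ := fun t => q (Set.projIcc 0 1 (by norm_num) t) with hQ
    set R : ℝ → ℝ := fun t => r (Set.projIcc 0 1 (by norm_num) t) with hR
    have hQc : ConvexOn ℝ (Set.Icc (0:ℝ) 1) Q := aux_convexOn P hP q hq
    have hRc : ConvexOn ℝ (Set.Icc (0:ℝ) 1) R := aux_convexOn P hP r hr
    obtain ⟨LQ, hLQ⟩ := aux_slope_tendsto hQc
    obtain ⟨LR, hLR⟩ := aux_slope_tendsto hRc
    -- Q - R agrees with ψ on [0,1]
    have hQR : ∀ t (ht : t ∈ Set.Icc (0:ℝ) 1), Q t - R t = ψ t := by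
      intro t ht
      have h1 : Q t = q ⟨t, ht⟩ := by rw [hQ]; simp; rw [Set.projIcc_of_mem _ ht]
      have h2 : R t = r ⟨t, ht⟩ := by rw [hR]; simp; rw [Set.projIcc_of_mem _ ht]
      rw [h1, h2]
      have := congrFun (congrArg DFunLike.coe hqr) ⟨t, ht⟩
      simpa [hf₀] using this
    -- the slope of f₀ is sin(1/(t-1/2))
    have hslope : ∀ᶠ t in 𝓝[>] (1/2 : ℝ),
        Real.sin ((t - 1/2)⁻¹)
          = (Q t - Q (1/2)) / (t - 1/2) - (R t - R (1/2)) / (t - 1/2) := by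
      filter_upwards [Ioo_mem_nhdsGT_of_mem (Set.mem_Ico.mpr ⟨le_refl _, by norm_num⟩ :
        (1/2 : ℝ) ∈ Set.Ico (1/2 : ℝ) 1)] with t ht
      have htI : t ∈ Set.Icc (0:ℝ) 1 := ⟨by linarith [ht.1], ht.2.le⟩
      have hhI : (1/2 : ℝ) ∈ Set.Icc (0:ℝ) 1 := by norm_num
      have hne : t - 1/2 ≠ 0 := sub_ne_zero.mpr (ne_of_gt ht.1)
      have e1 : Q t - R t = ψ t := hQR t htI
      have e2 : Q (1/2) - R (1/2) = ψ (1/2) := hQR _ hhI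
      have e3 : ψ (1/2 : ℝ) = 0 := by simp [hψ]
      rw [div_sub_div_same]
      have : Q t - Q (1/2) - (R t - R (1/2)) = ψ t := by
        rw [e3] at e2; linarith
      rw [this]
      rw [show ψ t = (t - 1/2) * Real.sin ((t - 1/2)⁻¹) from rfl]
      exact (mul_div_cancel_left₀ _ hne).symm
    have hlim : Tendsto (fun t => Real.sin ((t - 1/2)⁻¹)) (𝓝[>] (1/2 : ℝ))
        (𝓝 (LQ - LR)) := by
      exact Tendsto.congr' (hslope.mono fun t ht => ht.symm) (hLQ.sub hLR)
    -- two sequences giving different limits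
    have hπ : (0:ℝ) < π := Real.pi_pos
    have hseq : ∀ c : ℝ, 0 < c →
        Tendsto (fun n : ℕ => (1/2 : ℝ) + (c + n * (2 * π))⁻¹) atTop
          (𝓝[>] (1/2 : ℝ)) := by
      intro c hc
      have h1 : Tendsto (fun n : ℕ => c + (n : ℝ) * (2 * π)) atTop atTop := by
        apply tendsto_atTop_add_const_left
        exact Tendsto.atTop_mul_const (by linarith) tendsto_natCast_atTop_atTop
      have h2 : Tendsto (fun n : ℕ => (c + (n : ℝ) * (2 * π))⁻¹) atTop (𝓝 0) :=
        h1.inv_tendsto_atTop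
      apply tendsto_nhdsWithin_of_tendsto_nhds_of_eventually_within
      · have := h2.const_add (1/2 : ℝ)
        simpa using this
      · filter_upwards with n
        have hpos : (0:ℝ) < c + (n : ℝ) * (2 * π) := by positivity
        have : (0:ℝ) < (c + (n : ℝ) * (2 * π))⁻¹ := inv_pos.mpr hpos
        simp only [Set.mem_Ioi]
        linarith
    have hval : ∀ (c : ℝ) (n : ℕ),
        ((1/2 : ℝ) + (c + n * (2 * π))⁻¹ - 1/2)⁻¹ = c + n * (2 * π) := by
      intro c n
      rw [add_sub_cancel_left, inv_inv]
    -- limit along first sequence : sin(π/2 + 2πn) = 1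
    have hA := hlim.comp (hseq (π/2) (by positivity))
    have hA1 : (fun n : ℕ => Real.sin (((1/2 : ℝ) + (π/2 + n * (2 * π))⁻¹ - 1/2)⁻¹))
        = fun _ : ℕ => 1 := by
      funext n
      rw [hval (π/2) n, Real.sin_add_nat_mul_two_pi, Real.sin_pi_div_two]
    rw [show (fun t => Real.sin ((t - 1/2)⁻¹)) ∘
        (fun n : ℕ => (1/2 : ℝ) + (π/2 + n * (2 * π))⁻¹)
        = fun n : ℕ => Real.sin (((1/2 : ℝ) + (π/2 + n * (2 * π))⁻¹ - 1/2)⁻¹) from rfl,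
      hA1] at hA
    have hLeq1 : LQ - LR = 1 := tendsto_nhds_unique hA tendsto_const_nhds
    -- limit along second sequence : sin(π + 2πn) = 0
    have hB := hlim.comp (hseq π hπ)
    have hB1 : (fun n : ℕ => Real.sin (((1/2 : ℝ) + (π + n * (2 * π))⁻¹ - 1/2)⁻¹))
        = fun _ : ℕ => 0 := by
      funext n
      rw [hval π n, Real.sin_add_nat_mul_two_pi, Real.sin_pi]
    rw [show (fun t => Real.sin ((t - 1/2)⁻¹)) ∘
        (fun n : ℕ => (1/2 : ℝ) + (π + n * (2 * π))⁻¹)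
        = fun n : ℕ => Real.sin (((1/2 : ℝ) + (π + n * (2 * π))⁻¹ - 1/2)⁻¹) from rfl,
      hB1] at hB
    have hLeq0 : LQ - LR = 0 := tendsto_nhds_unique hB tendsto_const_nhds
    have h10 : (1 : ℝ) = 0 := by rw [← hLeq1, hLeq0]
    norm_num at h10
end

section
/- Let S = ℝ ⊕ c₀ (with the sup-type norm) be ordered by the cone P = {(t, x) : t ≥ 0, xₙ ≥ 0 for all n, and Σₙ xₙ ≤ t}. Then P is a closed convex cone, P - P is dense in S, but P - P ≠ S. -/
open Pointwise ZeroAtInfty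

open ZeroAtInftyContinuousMap in
/-- Truncation of a sequence to its first `N` entries, as an element of `C₀(ℕ, ℝ)`. -/
noncomputable def trunc16 (x : ℕ → ℝ) (N : ℕ) : C₀(ℕ, ℝ) :=
  ⟨⟨fun n => if n < N then x n else 0, continuous_of_discreteTopology⟩, by
    rw [cocompact_eq_atTop]
    refine tendsto_const_nhds.congr' ?_
    filter_upwards [Filter.eventually_ge_atTop N] with n hn
    simp [Nat.not_lt.2 hn]⟩

@[simp] lemma trunc16_apply (x : ℕ → ℝ) (N n : ℕ) :
    trunc16 x N n = if n < N then x n else 0 := rfl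

open ZeroAtInftyContinuousMap in
/-- The harmonic sequence `n ↦ 1/(n+1)` as an element of `C₀(ℕ, ℝ)`. -/
noncomputable def harm16 : C₀(ℕ, ℝ) :=
  ⟨⟨fun n => 1 / ((n : ℝ) + 1), continuous_of_discreteTopology⟩, by
    rw [cocompact_eq_atTop]
    exact tendsto_one_div_add_atTop_nhds_zero_nat⟩

@[simp] lemma harm16_apply (n : ℕ) : harm16 n = 1 / ((n : ℝ) + 1) := rfl

lemma cont_eval16 (n : ℕ) : Continuous fun f : C₀(ℕ, ℝ) => f n := by
  refine (LipschitzWith.mk_one fun f g => ?_).continuous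
  have h := BoundedContinuousFunction.dist_coe_le_dist (f := f.toBCF) (g := g.toBCF) n
  rw [ZeroAtInftyContinuousMap.dist_toBCF_eq_dist] at h
  simpa using h

lemma sum_trunc16_le (g x : ℕ → ℝ) (hg : ∀ n, 0 ≤ g n) (hle : ∀ n, g n ≤ |x n|)
    (N : ℕ) (F : Finset ℕ) :
    ∑ n ∈ F, trunc16 g N n ≤ ∑ n ∈ Finset.range N, |x n| := by
  calc ∑ n ∈ F, trunc16 g N n
      = ∑ n ∈ F ∩ Finset.range N, trunc16 g N n := by
        refine (Finset.sum_subset Finset.inter_subset_left fun n hn hn' => ?_).symm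
        have : ¬ n < N := by
          simp only [Finset.mem_inter, Finset.mem_range] at hn' ⊢
          tauto
        simp [this]
    _ ≤ ∑ n ∈ Finset.range N, trunc16 g N n := by
        refine Finset.sum_le_sum_of_subset_of_nonneg Finset.inter_subset_right
          fun n _ _ => ?_
        by_cases h : n < N <;> simp [h, hg n]
    _ ≤ ∑ n ∈ Finset.range N, |x n| := by
        refine Finset.sum_le_sum fun n hn => ?_
        simp only [Finset.mem_range] at hn
        simp [hn, hle n]

/-- In `S = ℝ ⊕ c₀` (max norm), the cone
`P = {(t, x) : t ≥ 0, x ≥ 0, Σₙ xₙ ≤ t}` is a closed convex cone, `P - P` is dense,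
but `P - P ≠ S`. (The summability condition `Σₙ xₙ ≤ t` is expressed via all finite
partial sums, which is equivalent for nonnegative terms.) -/
theorem stmt_16
    (P : Set (ℝ × C₀(ℕ, ℝ)))
    (hP : P = {p : ℝ × C₀(ℕ, ℝ) | 0 ≤ p.1 ∧ (∀ n, 0 ≤ p.2 n) ∧
      ∀ F : Finset ℕ, ∑ n ∈ F, p.2 n ≤ p.1}) :
    IsClosed P ∧ Convex ℝ P ∧ (∀ (c : ℝ), 0 ≤ c → ∀ p ∈ P, c • p ∈ P) ∧
      Dense (P - P) ∧ P - P ≠ Set.univ := by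
  refine ⟨?_, ?_, ?_, ?_, ?_⟩
  · -- closed
    have hset : P = {p : ℝ × C₀(ℕ, ℝ) | 0 ≤ p.1} ∩
        ((⋂ n, {p : ℝ × C₀(ℕ, ℝ) | 0 ≤ p.2 n}) ∩
          ⋂ F : Finset ℕ, {p : ℝ × C₀(ℕ, ℝ) | ∑ n ∈ F, p.2 n ≤ p.1}) := by
      rw [hP]; ext p; simp [Set.mem_iInter, and_assoc]
    rw [hset]
    refine (isClosed_le continuous_const continuous_fst).inter (IsClosed.inter ?_ ?_)
    · exact isClosed_iInter fun n =>
        isClosed_le continuous_const ((cont_eval16 n).comp continuous_snd)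
    · refine isClosed_iInter fun F => isClosed_le ?_ continuous_fst
      exact continuous_finset_sum F fun n _ => (cont_eval16 n).comp continuous_snd
  · -- convex
    intro p hp q hq a b ha hb hab
    rw [hP] at hp hq ⊢
    obtain ⟨hp1, hp2, hp3⟩ := hp
    obtain ⟨hq1, hq2, hq3⟩ := hq
    have hfst : (a • p + b • q).1 = a * p.1 + b * q.1 := by simp [smul_eq_mul]
    refine ⟨by rw [hfst]; positivity, fun n => ?_, fun F => ?_⟩
    · have : (a • p + b • q).2 n = a * p.2 n + b * q.2 n := by
        simp [Prod.smul_snd, smul_eq_mul]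
      rw [this]
      have := hp2 n; have := hq2 n; positivity
    · have : ∀ n, (a • p + b • q).2 n = a * p.2 n + b * q.2 n := fun n => by
        simp [Prod.smul_snd, smul_eq_mul]
      simp only [this, Finset.sum_add_distrib, ← Finset.mul_sum]
      have h1 : a * ∑ n ∈ F, p.2 n ≤ a * p.1 := mul_le_mul_of_nonneg_left (hp3 F) ha
      have h2 : b * ∑ n ∈ F, q.2 n ≤ b * q.1 := mul_le_mul_of_nonneg_left (hq3 F) hb
      rw [hfst]; linarith
  · -- cone
    intro c hc p hp
    rw [hP] at hp ⊢
    obtain ⟨hp1, hp2, hp3⟩ := hp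
    refine ⟨by simp [smul_eq_mul]; positivity, fun n => ?_, fun F => ?_⟩
    · have : (c • p).2 n = c * p.2 n := by simp [Prod.smul_snd, smul_eq_mul]
      rw [this]; have := hp2 n; positivity
    · have h2 : ∀ n, (c • p).2 n = c * p.2 n := fun n => by
        simp [Prod.smul_snd, smul_eq_mul]
      have h1 : (c • p).1 = c * p.1 := by simp [smul_eq_mul]
      simp only [h2, ← Finset.mul_sum, h1]
      exact mul_le_mul_of_nonneg_left (hp3 F) hc
  · -- dense
    rw [Metric.dense_iff]
    rintro ⟨t, x⟩ r hr
    -- choose N from zero at infinity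
    have hx : Filter.Tendsto x Filter.atTop (nhds 0) := by
      have := zero_at_infty x
      rwa [cocompact_eq_atTop] at this
    obtain ⟨N, hN⟩ := (Metric.tendsto_atTop.1 hx) (r / 2) (by positivity)
    set y : C₀(ℕ, ℝ) := trunc16 x N with hy
    refine ⟨(t, y), ?_, ?_⟩
    · -- in the ball
      have hdy : dist y x ≤ r / 2 := by
        rw [← ZeroAtInftyContinuousMap.dist_toBCF_eq_dist]
        refine BoundedContinuousFunction.dist_le (by positivity) |>.2 fun n => ?_
        by_cases h : n < N
        · simp only [hy, ZeroAtInftyContinuousMap.toBCF_apply, trunc16_apply, if_pos h,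
            dist_self]
          positivity
        · have h2 := hN n (Nat.not_lt.1 h)
          simp only [hy, ZeroAtInftyContinuousMap.toBCF_apply, trunc16_apply, if_neg h]
          rw [dist_comm]
          exact le_of_lt h2
      rw [Metric.mem_ball, Prod.dist_eq]
      simp only [dist_self]
      rw [max_eq_right dist_nonneg]
      linarith
    · -- (t, y) ∈ P - P
      set s : ℝ := ∑ n ∈ Finset.range N, |x n| with hs
      have hs0 : 0 ≤ s := Finset.sum_nonneg fun n _ => abs_nonneg _
      have habs : 0 ≤ t + |t| := by
        have := neg_abs_le t; linarith
      have habt : (0:ℝ) ≤ |t| := abs_nonneg t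
      refine Set.mem_sub.2 ⟨(t + |t| + s, trunc16 (fun n => max (x n) 0) N), ?_,
        (|t| + s, trunc16 (fun n => max (-x n) 0) N), ?_, ?_⟩
      · rw [hP]
        refine ⟨by dsimp only; linarith, fun n => ?_, fun F => ?_⟩
        · by_cases h : n < N <;> simp [h, le_max_right]
        · have h := sum_trunc16_le (fun n => max (x n) 0) x
            (fun n => le_max_right _ _) (fun n => max_le (le_abs_self _) (abs_nonneg _)) N F
          dsimp only
          calc ∑ n ∈ F, (trunc16 (fun n => max (x n) 0) N) n ≤ s := h
            _ ≤ t + |t| + s := by linarith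
      · rw [hP]
        refine ⟨by dsimp only; linarith, fun n => ?_, fun F => ?_⟩
        · by_cases h : n < N <;> simp [h, le_max_right]
        · have h := sum_trunc16_le (fun n => max (-x n) 0) x
            (fun n => le_max_right _ _)
            (fun n => max_le (by rw [← abs_neg]; exact le_abs_self _) (abs_nonneg _)) N F
          dsimp only
          calc ∑ n ∈ F, (trunc16 (fun n => max (-x n) 0) N) n ≤ s := h
            _ ≤ |t| + s := by linarith
      · ext
        · simp only [Prod.fst_sub]; ring
        · rename_i n
          simp only [Prod.snd_sub, ZeroAtInftyContinuousMap.coe_sub, Pi.sub_apply,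
            trunc16_apply, hy]
          by_cases h : n < N
          · simp [h, max_zero_sub_max_neg_zero_eq_self]
          · simp [h]
  · -- not everything
    intro hEq
    have hmem : ((0 : ℝ), harm16) ∈ P - P := hEq ▸ Set.mem_univ _
    obtain ⟨p, hp, q, hq, hpq⟩ := Set.mem_sub.1 hmem
    rw [hP] at hp hq
    obtain ⟨hp1, hp2, hp3⟩ := hp
    obtain ⟨hq1, hq2, hq3⟩ := hq
    have key : ∀ n, harm16 n ≤ p.2 n := by
      intro n
      have h1 : (p - q).2 n = harm16 n := by rw [hpq]
      have h2 : (p - q).2 n = p.2 n - q.2 n := by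
        simp [Prod.snd_sub]
      have := hq2 n
      linarith [h1 ▸ h2]
    obtain ⟨M, hM⟩ := (Real.tendsto_sum_range_one_div_nat_succ_atTop.eventually_gt_atTop
      p.1).exists
    have : ∑ i ∈ Finset.range M, (1 : ℝ) / (i + 1) ≤ p.1 := by
      calc ∑ i ∈ Finset.range M, (1 : ℝ) / (i + 1)
          = ∑ i ∈ Finset.range M, harm16 i := by simp
        _ ≤ ∑ i ∈ Finset.range M, p.2 i := Finset.sum_le_sum fun i _ => key i
        _ ≤ p.1 := hp3 _
    linarith
end
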